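/- For a standard Gaussian random variable N and twice differentiable f with E[f(N)] = 0, equality E[(1/2)f''(N)]² = (1/2)E[f(N)²] holds if and only if f(x) = α(x² − 1) for some real α (almost everywhere with respect to the Gaussian measure). -/

import Mathlib

/-!
Write `φ` for the standard Gaussian density, so that `φ' = -x φ` and `φ'' = (x² - 1) φ`.
Then `u = φ (f' + x f)` satisfies `u' = φ (f'' - (x² - 1) f)`, which is integrable, so `u` has
limits at `±∞`; they vanish because `f' φ → 0` (as `φ` decreases and `f'' φ` is integrable) and
`x f φ` is integrable. This gives the Stein identity `E[f''(N)] = E[(N² - 1) f(N)]`, which applied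
to `H = x² - 1` itself also gives `E[H(N)²] = 2`. The claim is therefore the equality case of the
Cauchy–Schwarz inequality `E[H f]² ≤ E[H²] E[f²]`, attained exactly when `f` is a multiple of `H`.
-/

open MeasureTheory ProbabilityTheory Real Filter Set Topology
open scoped NNReal

section CauchySchwarz

variable {α : Type*} {m : MeasurableSpace α} {μ : Measure α} {f h : α → ℝ}

theorem integral_sub_mul_sq (hf : MemLp f 2 μ) (hh : MemLp h 2 μ) (c : ℝ) :
    ∫ x, (f x - c * h x) ^ 2 ∂μ
      = ∫ x, f x ^ 2 ∂μ - 2 * c * ∫ x, h x * f x ∂μ + c ^ 2 * ∫ x, h x ^ 2 ∂μ := by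
  have hhf : Integrable (fun x => h x * f x) μ := hh.integrable_mul hf
  have hexpand : (fun x => (f x - c * h x) ^ 2)
      = fun x => (f x ^ 2 - 2 * c * (h x * f x)) + c ^ 2 * h x ^ 2 := by
    ext x; ring
  have hdiff : Integrable (fun x => f x ^ 2 - 2 * c * (h x * f x)) μ :=
    hf.integrable_sq.sub (hhf.const_mul _)
  rw [hexpand, integral_add hdiff (hh.integrable_sq.const_mul _),
    integral_sub hf.integrable_sq (hhf.const_mul _), integral_const_mul, integral_const_mul]

theorem sq_integral_mul_eq_mul_iff (hf : MemLp f 2 μ) (hh : MemLp h 2 μ)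
    (hh0 : ∫ x, h x ^ 2 ∂μ ≠ 0) :
    (∫ x, h x * f x ∂μ) ^ 2 = (∫ x, h x ^ 2 ∂μ) * ∫ x, f x ^ 2 ∂μ
      ↔ ∃ c : ℝ, f =ᵐ[μ] fun x => c * h x := by
  constructor
  · intro hEq
    set c := (∫ x, h x * f x ∂μ) / ∫ x, h x ^ 2 ∂μ with hc
    have hzero : ∫ x, (f x - c * h x) ^ 2 ∂μ = 0 := by
      rw [integral_sub_mul_sq hf hh, hc]
      field_simp
      linear_combination -hEq
    have hint : Integrable (fun x => (f x - c * h x) ^ 2) μ :=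
      (hf.sub (hh.const_mul c)).integrable_sq
    refine ⟨c, ?_⟩
    filter_upwards [(integral_eq_zero_iff_of_nonneg (fun x => sq_nonneg _) hint).1 hzero]
      with x hx
    simpa [sub_eq_zero] using hx
  · rintro ⟨c, hfc⟩
    have hhf : ∫ x, h x * f x ∂μ = c * ∫ x, h x ^ 2 ∂μ := by
      rw [← integral_const_mul]
      exact integral_congr_ae (hfc.mono fun x hx => by simp only [hx]; ring)
    have hff : ∫ x, f x ^ 2 ∂μ = c ^ 2 * ∫ x, h x ^ 2 ∂μ := by
      rw [← integral_const_mul]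
      exact integral_congr_ae (hfc.mono fun x hx => by simp only [hx]; ring)
    rw [hhf, hff]
    ring

end CauchySchwarz

section DecreasingWeight

variable {ρ g g' : ℝ → ℝ}

theorem tendsto_mul_integral_Icc_of_antitoneOn (hρ_nonneg : ∀ x, 0 ≤ ρ x)
    (hρ_anti : AntitoneOn ρ (Ici 0)) (hρ_lim : Tendsto ρ atTop (𝓝 0)) (hg'_meas : Measurable g')
    (hg' : IntegrableOn (fun x => ρ x * g' x) (Ici 0)) :
    Tendsto (fun x => ρ x * ∫ t in Icc 0 x, g' t) atTop (𝓝 0) := by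
  -- Dominated convergence: `t ↦ 1_{t ≤ x} ρ x g' t` is dominated by `|ρ t g' t|` because `ρ`
  -- decreases, and tends to `0` pointwise because `ρ x → 0`.
  set F : ℝ → ℝ → ℝ := fun x => (Iic x).indicator fun t => ρ x * g' t
  have hF (x : ℝ) : ∫ t in Ici 0, F x t = ρ x * ∫ t in Icc 0 x, g' t := by
    rw [setIntegral_indicator measurableSet_Iic, Ici_inter_Iic, integral_const_mul]
  simp only [← hF]
  have h0 : (0 : ℝ) = ∫ _ in Ici (0 : ℝ), (0 : ℝ) := by simp
  nth_rw 2 [h0]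
  refine tendsto_integral_filter_of_dominated_convergence (fun t => ‖ρ t * g' t‖)
    (Eventually.of_forall fun x => ?_) ?_ hg'.norm ?_
  · exact ((measurable_const.mul hg'_meas).indicator measurableSet_Iic).aestronglyMeasurable
  · filter_upwards [eventually_ge_atTop 0] with x hx
    refine (ae_restrict_iff' measurableSet_Ici).2 (Eventually.of_forall fun t ht => ?_)
    by_cases htx : t ≤ x
    · simp only [F, indicator_of_mem (mem_Iic.2 htx), norm_mul, Real.norm_eq_abs,
        abs_of_nonneg (hρ_nonneg _)]
      exact mul_le_mul_of_nonneg_right (hρ_anti ht hx htx) (abs_nonneg _)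
    · simp only [F, indicator_of_notMem (fun h => htx (mem_Iic.1 h)), norm_zero]
      positivity
  · refine Eventually.of_forall fun t => ?_
    have : Tendsto (fun x => ρ x * g' t) atTop (𝓝 0) := by
      simpa using hρ_lim.mul_const (g' t)
    refine this.congr' ?_
    filter_upwards [eventually_ge_atTop t] with x hx
    simp [F, indicator_of_mem (mem_Iic.2 hx)]

theorem tendsto_mul_atTop_of_antitoneOn (hρ : Continuous ρ) (hρ_pos : ∀ x, 0 < ρ x)
    (hρ_anti : AntitoneOn ρ (Ici 0)) (hρ_lim : Tendsto ρ atTop (𝓝 0))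
    (hg : ∀ x, HasDerivAt g (g' x) x) (hg' : IntegrableOn (fun x => ρ x * g' x) (Ici 0)) :
    Tendsto (fun x => ρ x * g x) atTop (𝓝 0) := by
  have hg'_int (x : ℝ) : IntegrableOn g' (Icc 0 x) := by
    have := (hg'.mono_set (Icc_subset_Ici_self : Icc 0 x ⊆ Ici 0)).continuousOn_mul
      (hρ.inv₀ fun x => (hρ_pos x).ne').continuousOn isCompact_Icc
    refine this.congr_fun (fun t _ => ?_) measurableSet_Icc
    simp [(hρ_pos t).ne']
  have hg'_meas : Measurable g' := by
    rw [show g' = deriv g from funext fun x => (hg x).deriv.symm]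
    exact measurable_deriv g
  have hftc : ∀ᶠ x in atTop, ρ x * g 0 + ρ x * ∫ t in Icc 0 x, g' t = ρ x * g x := by
    filter_upwards [eventually_ge_atTop 0] with x hx
    rw [integral_Icc_eq_integral_Ioc, ← intervalIntegral.integral_of_le hx,
      intervalIntegral.integral_eq_sub_of_hasDerivAt (fun t _ => hg t)
        ((intervalIntegrable_iff_integrableOn_Icc_of_le hx).2 (hg'_int x))]
    ring
  simpa using ((hρ_lim.mul_const (g 0)).add (tendsto_mul_integral_Icc_of_antitoneOn
    (fun x => (hρ_pos x).le) hρ_anti hρ_lim hg'_meas hg')).congr' hftc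

end DecreasingWeight

theorem eq_zero_of_integrable_of_tendsto_atTop {g : ℝ → ℝ} (hg : Integrable g) {L : ℝ}
    (hL : Tendsto g atTop (𝓝 L)) : L = 0 := by
  refine (hg.integrableAtFilter atTop).eq_zero_of_tendsto (fun s hs => ?_) hL
  obtain ⟨b, hb⟩ := mem_atTop_sets.1 hs
  exact top_le_iff.1 (Real.volume_Ici (a := b) ▸ measure_mono hb)

section GaussianReal

variable {μ : ℝ} {v : ℝ≥0}

theorem integrable_gaussianReal_iff (hv : v ≠ 0) {g : ℝ → ℝ} :
    Integrable g (gaussianReal μ v) ↔ Integrable fun x => gaussianPDFReal μ v x * g x := by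
  rw [gaussianReal_of_var_ne_zero _ hv, integrable_withDensity_iff (measurable_gaussianPDF μ v)
    (ae_of_all _ fun _ => gaussianPDF_lt_top)]
  simp only [toReal_gaussianPDF, mul_comm]

theorem integrable_pow_gaussianReal (n : ℕ) :
    Integrable (fun x : ℝ => x ^ n) (gaussianReal μ v) :=
  integrable_pow_of_mem_interior_integrableExpSet (by simp) n

theorem memLp_sq_sub_one_gaussianReal : MemLp (fun x : ℝ => x ^ 2 - 1) 2 (gaussianReal μ v) := by
  have hsq : MemLp (fun x : ℝ => x ^ 2) 2 (gaussianReal μ v) := by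
    rw [memLp_two_iff_integrable_sq (by fun_prop)]
    simpa [← pow_mul] using integrable_pow_gaussianReal (μ := μ) (v := v) 4
  exact hsq.sub (memLp_const 1)

theorem measurePreserving_neg_gaussianReal :
    MeasurePreserving (fun x => -x) (gaussianReal 0 v) (gaussianReal 0 v) :=
  ⟨measurable_neg, by simp [gaussianReal_map_neg]⟩

end GaussianReal

local notation "φ" => gaussianPDFReal 0 1

local notation "γ" => gaussianReal 0 1

theorem gaussianPDFReal_zero_one_apply (x : ℝ) : φ x = (√(2 * π))⁻¹ * rexp (-x ^ 2 / 2) := by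
  simp [gaussianPDFReal]

theorem gaussianPDFReal_zero_one_neg (x : ℝ) : φ (-x) = φ x := by
  simp [gaussianPDFReal_zero_one_apply]

theorem hasDerivAt_gaussianPDFReal_zero_one (x : ℝ) : HasDerivAt φ (-x * φ x) x := by
  simp only [funext gaussianPDFReal_zero_one_apply]
  have h : HasDerivAt (fun x : ℝ => -x ^ 2 / 2) (-x) x :=
    ((hasDerivAt_pow 2 x).fun_neg.div_const 2).congr_deriv (by ring)
  exact (h.exp.const_mul _).congr_deriv (by ring)

theorem continuous_gaussianPDFReal_zero_one : Continuous φ :=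
  continuous_iff_continuousAt.2 fun x => (hasDerivAt_gaussianPDFReal_zero_one x).continuousAt

theorem antitoneOn_gaussianPDFReal_zero_one : AntitoneOn φ (Ici 0) := by
  intro x hx y _ hxy
  simp only [gaussianPDFReal_zero_one_apply]
  gcongr

theorem tendsto_gaussianPDFReal_zero_one_atTop : Tendsto φ atTop (𝓝 0) := by
  simp only [funext gaussianPDFReal_zero_one_apply]
  have : Tendsto (fun x : ℝ => -x ^ 2 / 2) atTop atBot :=
    (tendsto_neg_atTop_atBot.comp (tendsto_pow_atTop two_ne_zero)).atBot_div_const two_pos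
  simpa using (tendsto_exp_atBot.comp this).const_mul (√(2 * π))⁻¹

section SteinIdentity

variable {f f' f'' : ℝ → ℝ}

theorem hasDerivAt_gaussianPDFReal_zero_one_mul {x : ℝ} (hf : HasDerivAt f (f' x) x)
    (hf' : HasDerivAt f' (f'' x) x) :
    HasDerivAt (fun x => φ x * (f' x + x * f x)) (φ x * (f'' x - (x ^ 2 - 1) * f x)) x :=
  ((hasDerivAt_gaussianPDFReal_zero_one x).fun_mul
    (hf'.fun_add ((hasDerivAt_id' x).fun_mul hf))).congr_deriv (by ring)

theorem integrable_sq_sub_one_mul_gaussianReal (hf : MemLp f 2 γ) :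
    Integrable (fun x => (x ^ 2 - 1) * f x) γ :=
  memLp_sq_sub_one_gaussianReal.integrable_mul hf

theorem tendsto_gaussianPDFReal_zero_one_mul_atTop (hf : ∀ x, HasDerivAt f (f' x) x)
    (hf' : ∀ x, HasDerivAt f' (f'' x) x) (hf2 : MemLp f 2 γ) (hf'' : Integrable f'' γ) :
    Tendsto (fun x => φ x * (f' x + x * f x)) atTop (𝓝 0) := by
  have hu := tendsto_limUnder_of_hasDerivAt_of_integrableOn_Ioi (a := 0)
    (fun x _ => hasDerivAt_gaussianPDFReal_zero_one_mul (hf x) (hf' x))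
    ((integrable_gaussianReal_iff one_ne_zero).1
      (hf''.sub (integrable_sq_sub_one_mul_gaussianReal hf2))).integrableOn
  have hf'_lim : Tendsto (fun x => φ x * f' x) atTop (𝓝 0) :=
    tendsto_mul_atTop_of_antitoneOn continuous_gaussianPDFReal_zero_one
      (gaussianPDFReal_pos 0 1 · one_ne_zero) antitoneOn_gaussianPDFReal_zero_one
      tendsto_gaussianPDFReal_zero_one_atTop hf'
      ((integrable_gaussianReal_iff one_ne_zero).1 hf'').integrableOn
  have hxf : Integrable fun x => φ x * (x * f x) :=
    (integrable_gaussianReal_iff one_ne_zero).1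
      ((memLp_id_gaussianReal' 2 ENNReal.ofNat_ne_top).integrable_mul hf2)
  have hxf_lim := (hu.sub hf'_lim).congr fun x => (by ring : _ = φ x * (x * f x))
  rwa [← sub_zero (limUnder _ _), eq_zero_of_integrable_of_tendsto_atTop hxf hxf_lim] at hu

theorem tendsto_gaussianPDFReal_zero_one_mul_atBot (hf : ∀ x, HasDerivAt f (f' x) x)
    (hf' : ∀ x, HasDerivAt f' (f'' x) x) (hf2 : MemLp f 2 γ) (hf'' : Integrable f'' γ) :
    Tendsto (fun x => φ x * (f' x + x * f x)) atBot (𝓝 0) := by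
  have htop := tendsto_gaussianPDFReal_zero_one_mul_atTop (f := fun x => f (-x))
    (f' := fun x => -f' (-x)) (f'' := fun x => f'' (-x))
    (fun x => ((hf (-x)).comp x (hasDerivAt_neg x)).congr_deriv (by ring))
    (fun x => (((hf' (-x)).comp x (hasDerivAt_neg x)).neg).congr_deriv (by ring))
    (hf2.comp_measurePreserving measurePreserving_neg_gaussianReal)
    (measurePreserving_neg_gaussianReal.integrable_comp_of_integrable hf'')
  have hbot := (htop.comp tendsto_neg_atBot_atTop).neg
  rw [neg_zero] at hbot
  refine hbot.congr fun x => ?_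
  simp only [Function.comp, neg_neg, gaussianPDFReal_zero_one_neg]
  ring

theorem integral_deriv_deriv_gaussianReal (hf : ∀ x, HasDerivAt f (f' x) x)
    (hf' : ∀ x, HasDerivAt f' (f'' x) x) (hf2 : MemLp f 2 γ) (hf'' : Integrable f'' γ) :
    ∫ x, f'' x ∂γ = ∫ x, (x ^ 2 - 1) * f x ∂γ := by
  have h := integral_of_hasDerivAt_of_tendsto
    (fun x => hasDerivAt_gaussianPDFReal_zero_one_mul (hf x) (hf' x))
    ((integrable_gaussianReal_iff one_ne_zero).1
      (hf''.sub (integrable_sq_sub_one_mul_gaussianReal hf2)))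
    (tendsto_gaussianPDFReal_zero_one_mul_atBot hf hf' hf2 hf'')
    (tendsto_gaussianPDFReal_zero_one_mul_atTop hf hf' hf2 hf'')
  simp only [← smul_eq_mul (gaussianPDFReal 0 1 _),
    ← integral_gaussianReal_eq_integral_smul one_ne_zero, sub_self] at h
  rw [integral_sub hf'' (integrable_sq_sub_one_mul_gaussianReal hf2)] at h
  exact sub_eq_zero.1 h

end SteinIdentity

theorem integral_sq_sub_one_sq_gaussianReal : ∫ x, (x ^ 2 - 1) ^ 2 ∂γ = 2 := by
  have h := integral_deriv_deriv_gaussianReal (f := fun x => x ^ 2 - 1) (f' := fun x => 2 * x)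
    (f'' := fun _ => 2)
    (fun x => ((hasDerivAt_pow 2 x).sub_const 1).congr_deriv (by ring))
    (fun x => ((hasDerivAt_id x).const_mul 2).congr_deriv (by simp))
    memLp_sq_sub_one_gaussianReal (integrable_const 2)
  simpa [sq] using h.symm

theorem gaussian_second_deriv_sq_eq_iff_general (f : ℝ → ℝ)
    (hf : Differentiable ℝ f) (hf' : Differentiable ℝ (deriv f))
    (hf2 : Integrable (fun x => (f x) ^ 2) (gaussianReal 0 1))
    (hf'' : Integrable (fun x => deriv (deriv f) x) (gaussianReal 0 1)) :
    (∫ x, (1 / 2 : ℝ) * deriv (deriv f) x ∂(gaussianReal 0 1)) ^ 2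
        = (1 / 2) * ∫ x, (f x) ^ 2 ∂(gaussianReal 0 1)
      ↔ ∃ α : ℝ, f =ᵐ[gaussianReal 0 1] fun x => α * (x ^ 2 - 1) := by
  have hf_memLp : MemLp f 2 γ :=
    (memLp_two_iff_integrable_sq hf.continuous.aestronglyMeasurable).2 hf2
  have hstein := integral_deriv_deriv_gaussianReal (fun x => (hf x).hasDerivAt)
    (fun x => (hf' x).hasDerivAt) hf_memLp hf''
  rw [integral_const_mul, hstein, ← sq_integral_mul_eq_mul_iff hf_memLp
    memLp_sq_sub_one_gaussianReal (by norm_num [integral_sq_sub_one_sq_gaussianReal]),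
    integral_sq_sub_one_sq_gaussianReal]
  constructor <;> intro h <;> linarith

/-- Equality case of θ₃(f) ≤ θ₁(f)/2: `E[(1/2)f''(N)]² = (1/2)E[f(N)²]` iff
`f(x) = α(x² − 1)` (Gaussian-almost everywhere) for some real `α`. -/
theorem gaussian_second_deriv_sq_eq_iff (f : ℝ → ℝ)
    (hf : Differentiable ℝ f) (hf' : Differentiable ℝ (deriv f))
    (hmean : ∫ x, f x ∂(gaussianReal 0 1) = 0)
    (hf2 : Integrable (fun x => (f x) ^ 2) (gaussianReal 0 1))
    (hf'' : Integrable (fun x => deriv (deriv f) x) (gaussianReal 0 1)) :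
    (∫ x, (1 / 2 : ℝ) * deriv (deriv f) x ∂(gaussianReal 0 1)) ^ 2
        = (1 / 2) * ∫ x, (f x) ^ 2 ∂(gaussianReal 0 1)
      ↔ ∃ α : ℝ, f =ᵐ[gaussianReal 0 1] fun x => α * (x ^ 2 - 1) :=
  gaussian_second_deriv_sq_eq_iff_general f hf hf' hf2 hf''
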